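/- arXiv:1011.5666 — 2 statements merged into one kernel-verified Lean document; each statement's English description precedes it below -/
import Mathlib

section
/- Let K and T be convex bodies in ℝ^n with T centrally symmetric. Then N(K,T) ≤ vol(K + (1/2)T) / vol((1/2)T). -/
open MeasureTheory Pointwise
open scoped ENNReal

noncomputable section

abbrev Euc (n : ℕ) := EuclideanSpace ℝ (Fin n)

/-- A convex body: a compact convex set with nonempty interior. -/
def IsConvexBody {n : ℕ} (K : Set (Euc n)) : Prop :=
  Convex ℝ K ∧ IsCompact K ∧ (interior K).Nonempty

/-- The covering number `N(K,T)`: the least cardinality of a finite set `Λ`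
with `K ⊆ Λ + T`.  It is `⊤` if no finite cover exists. -/
def coveringNumber {n : ℕ} (K T : Set (Euc n)) : ℕ∞ :=
  sInf {m : ℕ∞ | ∃ Λ : Finset (Euc n), (Λ.card : ℕ∞) = m ∧ K ⊆ ↑Λ + T}

/-! Take a maximal family of points of `K` whose translates of `S = T/2` are pairwise disjoint.
The disjoint translates lie in `K + S`, so the family has at most `vol(K + S) / vol S` members.
By maximality every `x ∈ K` has `x + S` meeting some `y + S`, so `x ∈ y + (S - S)`, and
`S - S = T/2 + T/2 = T` because `T` is convex and symmetric. -/

lemma exists_max_card_finset {α : Type*} {P : Finset α → Prop} (N : ℕ) (hP : ∃ s, P s)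
    (hN : ∀ s, P s → s.card ≤ N) : ∃ s, P s ∧ ∀ t, P t → t.card ≤ s.card := by
  classical
  obtain ⟨s₀, hs₀⟩ := hP
  obtain ⟨s, hs, hcard⟩ := Nat.findGreatest_spec (P := fun m ↦ ∃ s, P s ∧ s.card = m)
    (hN s₀ hs₀) ⟨s₀, hs₀, rfl⟩
  exact ⟨s, hs, fun t ht ↦ hcard ▸ Nat.le_findGreatest (hN t ht) ⟨t, ht, rfl⟩⟩

section Packing

variable {G : Type*} [AddGroup G] {K S : Set G} {Λ : Finset G}

def IsPacking (K S : Set G) (Λ : Finset G) : Prop :=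
  ↑Λ ⊆ K ∧ (Λ : Set G).PairwiseDisjoint (· +ᵥ S)

lemma isPacking_empty : IsPacking K S ∅ := by
  simp [IsPacking]

lemma IsPacking.subset_add_sub [DecidableEq G] (hΛ : IsPacking K S Λ) (hS : S.Nonempty)
    (hmax : ∀ x ∈ K, x ∉ Λ → ¬ IsPacking K S (insert x Λ)) : K ⊆ ↑Λ + (S - S) := by
  intro x hx
  by_cases hxΛ : x ∈ Λ
  · obtain ⟨s, hs⟩ := hS
    exact ⟨x, hxΛ, s - s, Set.sub_mem_sub hs hs, by simp⟩
  have hnot : ¬ (insert x (Λ : Set G)).PairwiseDisjoint (· +ᵥ S) := fun h ↦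
    hmax x hx hxΛ ⟨by simpa using Set.insert_subset hx hΛ.1, by simpa using h⟩
  simp only [Set.pairwiseDisjoint_insert, hΛ.2, true_and, not_forall] at hnot
  obtain ⟨y, hy, -, hxy⟩ := hnot
  obtain ⟨_, ⟨s₁, hs₁, rfl⟩, ⟨s₂, hs₂, hs⟩⟩ := Set.not_disjoint_iff.1 hxy
  refine ⟨y, hy, s₂ - s₁, Set.sub_mem_sub hs₂ hs₁, ?_⟩
  simp only [vadd_eq_add] at hs
  show y + (s₂ - s₁) = x
  rw [← add_sub_assoc, hs, add_sub_cancel_right]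

variable [MeasurableSpace G] [MeasurableAdd G] (μ : Measure G) [μ.IsAddLeftInvariant]

lemma IsPacking.card_mul_measure_le (hΛ : IsPacking K S Λ) (hS : MeasurableSet S) :
    (Λ.card : ℝ≥0∞) * μ S ≤ μ (K + S) :=
  calc (Λ.card : ℝ≥0∞) * μ S = μ (⋃ x ∈ Λ, x +ᵥ S) := by
        rw [measure_biUnion_finset hΛ.2 fun x _ ↦ hS.const_vadd x]
        simp [measure_vadd]
    _ ≤ μ (K + S) := by
        refine measure_mono (Set.iUnion₂_subset fun x hx ↦ ?_)
        exact Set.vadd_set_subset_add (hΛ.1 hx)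

lemma exists_isPacking_subset_add_sub (hS : MeasurableSet S) (hS₀ : μ S ≠ 0)
    (hKS : μ (K + S) ≠ ⊤) : ∃ Λ, IsPacking K S Λ ∧ K ⊆ ↑Λ + (S - S) := by
  classical
  have hcard : ∀ Λ, IsPacking K S Λ → Λ.card ≤ ⌊(μ (K + S) / μ S).toReal⌋₊ := fun Λ hΛ ↦
    Nat.le_floor <| by
      simpa using ENNReal.toReal_mono (ENNReal.div_ne_top hKS hS₀)
        ((ENNReal.le_div_iff_mul_le (.inl hS₀) (.inr hKS)).2 (hΛ.card_mul_measure_le μ hS))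
  obtain ⟨Λ, hΛ, hmax⟩ := exists_max_card_finset _ ⟨∅, isPacking_empty⟩ hcard
  refine ⟨Λ, hΛ, hΛ.subset_add_sub (nonempty_of_measure_ne_zero hS₀) ?_⟩
  intro x _ hxΛ hins
  simpa [Finset.card_insert_of_notMem hxΛ] using hmax _ hins

end Packing

lemma Convex.inv_two_smul_sub_inv_two_smul {E : Type*} [AddCommGroup E] [Module ℝ E]
    {T : Set E} (hT : Convex ℝ T) (hsym : T = -T) :
    (2 : ℝ)⁻¹ • T - (2 : ℝ)⁻¹ • T = T := by
  rw [sub_eq_add_neg, ← Set.smul_set_neg, ← hsym, ← hT.add_smul (by norm_num) (by norm_num)]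
  norm_num

lemma coveringNumber_le_card {n : ℕ} {K T : Set (Euc n)} {Λ : Finset (Euc n)}
    (h : K ⊆ ↑Λ + T) : coveringNumber K T ≤ Λ.card :=
  sInf_le ⟨Λ, rfl, h⟩

theorem covering_number_le_of_symmetric_general
    {n : ℕ} (K T : Set (Euc n)) (hT : IsConvexBody T)
    (hTsym : T = -T) :
    (coveringNumber K T : ℝ≥0∞) ≤
      volume (K + (2 : ℝ)⁻¹ • T) / volume ((2 : ℝ)⁻¹ • T) := by
  set S : Set (Euc n) := (2 : ℝ)⁻¹ • T
  have hS : IsCompact S := hT.2.1.smul _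
  have hS₀ : volume S ≠ 0 := by
    refine (Measure.measure_pos_of_nonempty_interior _ ?_).ne'
    rw [interior_smul₀ (by norm_num)]
    exact hT.2.2.smul_set
  rcases eq_or_ne (volume (K + S)) ⊤ with hKS | hKS
  · rw [hKS, ENNReal.top_div_of_ne_top hS.measure_lt_top.ne]
    exact le_top
  obtain ⟨Λ, hΛ, hcover⟩ := exists_isPacking_subset_add_sub volume hS.measurableSet hS₀ hKS
  rw [hT.1.inv_two_smul_sub_inv_two_smul hTsym] at hcover
  calc (coveringNumber K T : ℝ≥0∞) ≤ Λ.card := by exact_mod_cast coveringNumber_le_card hcover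
    _ ≤ volume (K + S) / volume S := (ENNReal.le_div_iff_mul_le (.inl hS₀) (.inr hKS)).2 <|
      hΛ.card_mul_measure_le volume hS.measurableSet

theorem covering_number_le_of_symmetric
    {n : ℕ} (K T : Set (Euc n)) (hK : IsConvexBody K) (hT : IsConvexBody T)
    (hTsym : T = -T) :
    (coveringNumber K T : ℝ≥0∞) ≤
      volume (K + (2 : ℝ)⁻¹ • T) / volume ((2 : ℝ)⁻¹ • T) :=
  covering_number_le_of_symmetric_general K T hT hTsym
end
end

section
/- Let K ⊆ ℝ^n be a convex body whose centroid is at the origin, i.e. b(K) = 0. Then N(K-K, K) ≤ 24^n, where K-K = {x - y : x,y ∈ K} is the difference body of K. -/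
open MeasureTheory Pointwise
open scoped ENNReal

noncomputable section

/-- The centroid (barycenter) of a set `K`. -/
def centroid {n : ℕ} (K : Set (Euc n)) : Euc n :=
  (volume K).toReal⁻¹ • ∫ x in K, x

open Module

/-!
Averaging `x ↦ vol (K ∩ (x - K))`, whose integral is `vol K ^ 2`, over its support
`K + K = 2 K` gives an `x` for which `S = K ∩ (x - K)` has volume at least `2⁻ⁿ vol K`. Since `S`
is symmetric about `x / 2`, the set `S / 2 - S / 2` is a translate of a subset of `K`, and Ruzsa's
covering lemma covers `K - K` by at most `vol (K - K + S / 2) / vol (S / 2)` translates of it.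
As `S / 2` is a translate of a subset of `(K - K) / 4`, the numerator is at most
`(5 / 4)ⁿ vol (K - K) ≤ 5ⁿ vol K`, by the bound `vol (K - K) ≤ 4ⁿ vol K` that follows from the
same integral identity. Hence `20ⁿ` translates of `K` cover `K - K`.
-/

section Group

variable {G : Type*} [AddGroup G]

/-- `K ∩ (x - K)`, the largest subset of `K` symmetric about `x / 2`. -/
def symmetricSlice (K : Set G) (x : G) : Set G :=
  K ∩ (fun y => x - y) ⁻¹' K

lemma Set.PairwiseDisjoint.insert_vadd_of_notMem_add_sub {P : Set G} {Λ : Finset G}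
    (hΛ : (Λ : Set G).PairwiseDisjoint (· +ᵥ P)) {a : G} (ha : a ∉ (Λ : Set G) + (P - P)) :
    (insert a (Λ : Set G)).PairwiseDisjoint (· +ᵥ P) := by
  refine hΛ.insert fun l hl _ => Set.disjoint_left.2 ?_
  rintro _ ⟨p, hp, rfl⟩ ⟨q, hq, hqp⟩
  refine ha ⟨l, hl, q - p, ⟨q, hq, p, hp, rfl⟩, ?_⟩
  simp only [vadd_eq_add] at hqp ⊢
  rw [← add_sub_assoc, hqp, add_sub_cancel_right]

lemma IsCompact.sub [TopologicalSpace G] [IsTopologicalAddGroup G] {s t : Set G}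
    (hs : IsCompact s) (ht : IsCompact t) : IsCompact (s - t) := by
  simpa only [sub_eq_add_neg] using hs.add ht.neg

variable [MeasurableSpace G]

theorem lintegral_measure_inter_preimage_sub [MeasurableAdd₂ G] [MeasurableNeg G]
    (μ : Measure G) [SFinite μ] [μ.IsAddRightInvariant] {s t : Set G} (hs : MeasurableSet s)
    (ht : MeasurableSet t) :
    ∫⁻ x, μ (s ∩ (fun y => x - y) ⁻¹' t) ∂μ = μ s * μ t := by
  have hsi : Measurable (s.indicator (1 : G → ℝ≥0∞)) := measurable_one.indicator hs
  have hti : Measurable (t.indicator (1 : G → ℝ≥0∞)) := measurable_one.indicator ht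
  have hslice (x : G) : μ (s ∩ (fun y => x - y) ⁻¹' t) =
      ∫⁻ y, s.indicator 1 y * t.indicator 1 (x - y) ∂μ := by
    rw [← lintegral_indicator_one (hs.inter (ht.preimage (measurable_const_sub x))),
      Set.inter_indicator_one]
    rfl
  have hinner (y : G) :
      ∫⁻ x, s.indicator 1 y * t.indicator 1 (x - y) ∂μ = s.indicator 1 y * μ t := by
    rw [lintegral_const_mul (f := fun x => t.indicator 1 (x - y)) _
      (hti.comp (measurable_sub_const y)), lintegral_sub_right_eq_self (t.indicator 1),
      lintegral_indicator_one ht]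
  simp_rw [hslice]
  rw [lintegral_lintegral_swap ((hsi.comp measurable_snd).mul
    (hti.comp (measurable_fst.sub measurable_snd))).aemeasurable]
  simp_rw [hinner]
  rw [lintegral_mul_const _ hsi, lintegral_indicator_one hs]

variable [MeasurableAdd G] {μ : Measure G} [μ.IsAddLeftInvariant] {A P : Set G}

lemma card_mul_measure_le_measure_add {Λ : Finset G} (hP : MeasurableSet P)
    (hΛA : (Λ : Set G) ⊆ A) (hΛ : (Λ : Set G).PairwiseDisjoint (· +ᵥ P)) :
    Λ.card * μ P ≤ μ (A + P) :=
  calc Λ.card * μ P = ∑ l ∈ Λ, μ (l +ᵥ P) := by simp [measure_vadd]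
    _ = μ (⋃ l ∈ Λ, l +ᵥ P) := (measure_biUnion_finset hΛ fun l _ => hP.const_vadd l).symm
    _ ≤ μ (A + P) := by
      refine measure_mono (Set.iUnion₂_subset fun l hl => ?_)
      rintro _ ⟨p, hp, rfl⟩
      exact Set.add_mem_add (hΛA hl) hp

/-- Ruzsa's covering lemma, with measures in place of cardinalities. -/
theorem exists_finset_subset_add_sub_of_measure (hP : MeasurableSet P) (hP₀ : μ P ≠ 0)
    (hAP : μ (A + P) ≠ ∞) : ∃ Λ : Finset G, A ⊆ Λ + (P - P) ∧ Λ.card * μ P ≤ μ (A + P) := by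
  classical
  suffices ∃ Λ : Finset G, ((Λ : Set G) ⊆ A ∧ (Λ : Set G).PairwiseDisjoint (· +ᵥ P)) ∧
      A ⊆ Λ + (P - P) by
    obtain ⟨Λ, ⟨hΛA, hΛ⟩, hcover⟩ := this
    exact ⟨Λ, hcover, card_mul_measure_le_measure_add hP hΛA hΛ⟩
  -- Otherwise every packing extends by a point of `A`, giving packings of every size.
  by_contra! hcover
  obtain ⟨p, hp⟩ := nonempty_of_measure_ne_zero hP₀
  have hpacking (k : ℕ) : ∃ Λ : Finset G, ((Λ : Set G) ⊆ A ∧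
      (Λ : Set G).PairwiseDisjoint (· +ᵥ P)) ∧ Λ.card = k := by
    induction k with
    | zero => exact ⟨∅, by simp⟩
    | succ k ih =>
      obtain ⟨Λ, hΛ, rfl⟩ := ih
      obtain ⟨a, haA, ha⟩ := Set.not_subset.1 (hcover Λ hΛ)
      have haΛ : a ∉ Λ := fun h => ha ⟨a, h, p - p, ⟨p, hp, p, hp, rfl⟩, by simp⟩
      refine ⟨insert a Λ, ⟨?_, ?_⟩, Finset.card_insert_of_notMem haΛ⟩
      · simpa using Set.insert_subset haA hΛ.1
      · simpa using hΛ.2.insert_vadd_of_notMem_add_sub ha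
  obtain ⟨N, hN⟩ := ENNReal.exists_nat_gt (ENNReal.div_lt_top hAP hP₀).ne
  obtain ⟨Λ, ⟨hΛA, hΛ⟩, rfl⟩ := hpacking N
  have := card_mul_measure_le_measure_add (μ := μ) hP hΛA hΛ
  rw [← ENNReal.le_div_iff_mul_le (.inl hP₀) (.inr hAP)] at this
  exact this.not_gt hN

end Group

section ConvexSet

variable {E : Type*} [AddCommGroup E] [Module ℝ E] {K : Set E}

lemma Convex.add_self_eq_two_smul (hK : Convex ℝ K) : K + K = (2 : ℝ) • K := by
  rw [← one_add_one_eq_two, hK.add_smul zero_le_one zero_le_one, one_smul]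

lemma Convex.inv_two_smul_symmetricSlice_sub_self_subset (hK : Convex ℝ K) (x : E) :
    (2⁻¹ : ℝ) • symmetricSlice K x - (2⁻¹ : ℝ) • symmetricSlice K x ⊆
      -((2⁻¹ : ℝ) • x) +ᵥ K := by
  rintro _ ⟨_, ⟨s, hs, rfl⟩, _, ⟨t, ht, rfl⟩, rfl⟩
  refine ⟨_, hK hs.1 ht.2 (by norm_num : (0 : ℝ) ≤ 2⁻¹) (by norm_num : (0 : ℝ) ≤ 2⁻¹)
    (by norm_num), ?_⟩
  simp only [vadd_eq_add]
  module

end ConvexSet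

section Volume

variable {E : Type*} [NormedAddCommGroup E] [NormedSpace ℝ E] [MeasurableSpace E] [BorelSpace E]
  [FiniteDimensional ℝ E] (μ : Measure E) [μ.IsAddHaarMeasure] {K : Set E}

lemma addHaar_ofNat_smul (k : ℕ) [k.AtLeastTwo] (s : Set E) :
    μ ((ofNat(k) : ℝ) • s) = (ofNat(k) : ℝ≥0∞) ^ finrank ℝ E * μ s := by
  rw [Measure.addHaar_smul_of_nonneg μ (Nat.ofNat_nonneg _),
    ENNReal.ofReal_pow (Nat.ofNat_nonneg _), ENNReal.ofReal_ofNat]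

lemma addHaar_eq_two_pow_mul_addHaar_inv_two_smul (s : Set E) :
    μ s = 2 ^ finrank ℝ E * μ ((2⁻¹ : ℝ) • s) := by
  rw [← addHaar_ofNat_smul, smul_inv_smul₀ two_ne_zero]

theorem Convex.exists_addHaar_le_two_pow_mul_symmetricSlice (hK : Convex ℝ K)
    (hKc : IsCompact K) : ∃ x, μ K ≤ 2 ^ finrank ℝ E * μ (symmetricSlice K x) := by
  rcases eq_or_ne (μ K) 0 with hK₀ | hK₀
  · exact ⟨0, by simp [hK₀]⟩
  have hKfin : μ K ≠ ∞ := hKc.measure_lt_top.ne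
  have hKm : MeasurableSet K := hKc.measurableSet
  have hsupp : (fun x => μ (symmetricSlice K x)).support ⊆ K + K := by
    intro x hx
    obtain ⟨y, hy, hxy⟩ := nonempty_of_measure_ne_zero hx
    exact ⟨y, hy, x - y, hxy, add_sub_cancel y x⟩
  have hint : ∫⁻ x in K + K, μ (symmetricSlice K x) ∂μ = μ K * μ K := by
    rw [setLIntegral_eq_of_support_subset hsupp, ← lintegral_measure_inter_preimage_sub μ hKm hKm]
    rfl
  have hKK : μ (K + K) = 2 ^ finrank ℝ E * μ K := by
    rw [hK.add_self_eq_two_smul, addHaar_ofNat_smul]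
  obtain ⟨x, -, hx⟩ := exists_setLAverage_le (μ := μ) (f := fun x => μ (symmetricSlice K x))
    (by rw [hKK]; positivity) (hKc.add hKc).measurableSet.nullMeasurableSet
    (by rw [hint]; finiteness)
  rw [setLAverage_eq, hint, hKK, ENNReal.mul_div_mul_right _ _ hK₀ hKfin,
    ENNReal.div_le_iff (by positivity) (by finiteness)] at hx
  exact ⟨x, hx.trans_eq (mul_comm _ _)⟩

theorem Convex.addHaar_sub_self_le (hK : Convex ℝ K) (hKc : IsCompact K) (hK₀ : μ K ≠ 0) :
    μ (K - K) ≤ 4 ^ finrank ℝ E * μ K := by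
  have hKm : MeasurableSet K := hKc.measurableSet
  set D := (2⁻¹ : ℝ) • (K - K)
  have hmem : ∀ x ∈ D, μ ((2⁻¹ : ℝ) • K) ≤ μ (K ∩ (fun y => x - y) ⁻¹' (-K)) := by
    rintro _ ⟨_, ⟨a, ha, b, hb, rfl⟩, rfl⟩
    rw [← measure_vadd μ ((2⁻¹ : ℝ) • a)]
    refine measure_mono ?_
    rintro _ ⟨_, ⟨k, hk, rfl⟩, rfl⟩
    refine ⟨hK ha hk (by norm_num) (by norm_num) (by norm_num), Set.mem_neg.2 ?_⟩
    convert hK hb hk (by norm_num : (0 : ℝ) ≤ 2⁻¹) (by norm_num : (0 : ℝ) ≤ 2⁻¹) (by norm_num)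
      using 1
    simp only [vadd_eq_add]
    module
  have hint : μ D * μ ((2⁻¹ : ℝ) • K) ≤ μ K * μ K :=
    calc μ D * μ ((2⁻¹ : ℝ) • K) = ∫⁻ x, D.indicator (fun _ => μ ((2⁻¹ : ℝ) • K)) x ∂μ := by
          rw [lintegral_indicator_const ((hKc.sub hKc).smul _).measurableSet, mul_comm]
      _ ≤ ∫⁻ x, μ (K ∩ (fun y => x - y) ⁻¹' (-K)) ∂μ := lintegral_mono (Set.indicator_le hmem)
      _ = μ K * μ K := by
          rw [lintegral_measure_inter_preimage_sub μ hKm hKm.neg, Measure.measure_neg]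
  refine (ENNReal.mul_le_mul_iff_left hK₀ hKc.measure_lt_top.ne).1 ?_
  calc μ (K - K) * μ K = 4 ^ finrank ℝ E * (μ D * μ ((2⁻¹ : ℝ) • K)) := by
        rw [addHaar_eq_two_pow_mul_addHaar_inv_two_smul μ (K - K),
          addHaar_eq_two_pow_mul_addHaar_inv_two_smul μ K, show (4 : ℝ≥0∞) = 2 * 2 by norm_num,
          mul_pow]
        ring
    _ ≤ 4 ^ finrank ℝ E * (μ K * μ K) := by gcongr
    _ = 4 ^ finrank ℝ E * μ K * μ K := by ring

lemma Convex.addHaar_sub_self_add_inv_two_smul_symmetricSlice_le (hK : Convex ℝ K) (x : E) :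
    4 ^ finrank ℝ E * μ (K - K + (2⁻¹ : ℝ) • symmetricSlice K x) ≤
      5 ^ finrank ℝ E * μ (K - K) := by
  rw [← measure_vadd μ (-((4⁻¹ : ℝ) • x)), ← addHaar_ofNat_smul, ← addHaar_ofNat_smul]
  refine measure_mono ?_
  have h5 := (hK.sub hK).add_smul (by norm_num : (0 : ℝ) ≤ 4) zero_le_one
  rw [one_smul, show (4 : ℝ) + 1 = 5 by norm_num] at h5
  rw [h5]
  rintro _ ⟨_, ⟨_, ⟨a, ha, _, ⟨s, hs, rfl⟩, rfl⟩, rfl⟩, rfl⟩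
  refine ⟨(4 : ℝ) • a, Set.smul_mem_smul_set ha, s - (x - s), Set.sub_mem_sub hs.1 hs.2, ?_⟩
  simp only [vadd_eq_add]
  module

theorem Convex.exists_finset_sub_self_subset_add_card_mul_le (hK : Convex ℝ K)
    (hKc : IsCompact K) {x : E} (hx : μ (symmetricSlice K x) ≠ 0) :
    ∃ Λ : Finset E, K - K ⊆ Λ + K ∧
      2 ^ finrank ℝ E * (Λ.card * μ (symmetricSlice K x)) ≤ 5 ^ finrank ℝ E * μ (K - K) := by
  classical
  set P := (2⁻¹ : ℝ) • symmetricSlice K x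
  have hSP := addHaar_eq_two_pow_mul_addHaar_inv_two_smul μ (symmetricSlice K x)
  have hP₀ : μ P ≠ 0 := fun h => hx (by rw [hSP, h, mul_zero])
  have hKm : MeasurableSet K := hKc.measurableSet
  have hPm : MeasurableSet P := (hKm.inter (hKm.preimage (measurable_const_sub x))).const_smul₀ _
  have hAP := hK.addHaar_sub_self_add_inv_two_smul_symmetricSlice_le μ x
  have hAPfin : μ (K - K + P) ≠ ∞ :=
    (ENNReal.lt_top_of_mul_ne_top_right (ne_top_of_le_ne_top
      (ENNReal.mul_ne_top (by finiteness) (hKc.sub hKc).measure_lt_top.ne) hAP)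
      (by positivity)).ne
  obtain ⟨Λ, hcover, hcard⟩ := exists_finset_subset_add_sub_of_measure hPm hP₀ hAPfin
  refine ⟨Λ.image (· + -((2⁻¹ : ℝ) • x)), fun z hz => ?_, ?_⟩
  · obtain ⟨l, hl, _, hw, rfl⟩ := hcover hz
    obtain ⟨k, hk, rfl⟩ := hK.inv_two_smul_symmetricSlice_sub_self_subset x hw
    exact ⟨_, Finset.mem_image_of_mem _ hl, k, hk, by simp [add_assoc]⟩
  calc _ ≤ 2 ^ finrank ℝ E * (Λ.card * (2 ^ finrank ℝ E * μ P)) := by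
        rw [← hSP]; gcongr _ * (?_ * _); exact_mod_cast Finset.card_image_le
    _ = 4 ^ finrank ℝ E * (Λ.card * μ P) := by
        rw [show (4 : ℝ≥0∞) = 2 * 2 by norm_num, mul_pow]; ring
    _ ≤ 4 ^ finrank ℝ E * μ (K - K + P) := by gcongr
    _ ≤ 5 ^ finrank ℝ E * μ (K - K) := hAP

end Volume

theorem Convex.exists_finset_sub_self_subset_add_card_le {E : Type*} [NormedAddCommGroup E]
    [NormedSpace ℝ E] [FiniteDimensional ℝ E] {K : Set E} (hK : Convex ℝ K) (hKc : IsCompact K)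
    (hKi : (interior K).Nonempty) :
    ∃ Λ : Finset E, K - K ⊆ Λ + K ∧ Λ.card ≤ 20 ^ finrank ℝ E := by
  borelize E
  set μ : Measure E := Measure.addHaar
  have hK₀ : μ K ≠ 0 := (Measure.measure_pos_of_nonempty_interior μ hKi).ne'
  obtain ⟨x, hx⟩ := hK.exists_addHaar_le_two_pow_mul_symmetricSlice μ hKc
  obtain ⟨Λ, hcover, hcard⟩ := hK.exists_finset_sub_self_subset_add_card_mul_le μ hKc
    (x := x) fun h => hK₀ (le_zero_iff.1 (by simpa [h] using hx))
  refine ⟨Λ, hcover, ?_⟩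
  have : (Λ.card : ℝ≥0∞) * μ K ≤ 20 ^ finrank ℝ E * μ K :=
    calc (Λ.card : ℝ≥0∞) * μ K ≤ 2 ^ finrank ℝ E * (Λ.card * μ (symmetricSlice K x)) := by
          rw [mul_left_comm]; gcongr
      _ ≤ 5 ^ finrank ℝ E * μ (K - K) := hcard
      _ ≤ 5 ^ finrank ℝ E * (4 ^ finrank ℝ E * μ K) := by
          gcongr; exact hK.addHaar_sub_self_le μ hKc hK₀
      _ = 20 ^ finrank ℝ E * μ K := by rw [← mul_assoc, ← mul_pow]; norm_num
  exact_mod_cast (ENNReal.mul_le_mul_iff_left hK₀ hKc.measure_lt_top.ne).1 this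

theorem covering_number_difference_body_le_general
    {n : ℕ} (K : Set (Euc n)) (hK : IsConvexBody K) :
    coveringNumber (K - K) K ≤ 24 ^ n := by
  obtain ⟨hconv, hcomp, hint⟩ := hK
  obtain ⟨Λ, hcover, hcard⟩ := hconv.exists_finset_sub_self_subset_add_card_le hcomp hint
  rw [finrank_euclideanSpace_fin] at hcard
  calc coveringNumber (K - K) K ≤ Λ.card := sInf_le ⟨Λ, rfl, hcover⟩
    _ ≤ 20 ^ n := by exact_mod_cast hcard
    _ ≤ 24 ^ n := by gcongr; norm_num

theorem covering_number_difference_body_le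
    {n : ℕ} (K : Set (Euc n)) (hK : IsConvexBody K)
    (hcent : centroid K = 0) :
    coveringNumber (K - K) K ≤ 24 ^ n :=
  covering_number_difference_body_le_general K hK

end
end
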